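/- Let 𝒞 be a quasiminimal excellent class, let H, H' ∈ 𝒞, and let C ⊆ H be a countable crown. Then every closed partial embedding f : H ⇀ H' with domain C extends to a closed embedding f̂ : cl_H(C) ↪ H'. -/

import Mathlib

/-!  Common framework: quasiminimal excellent classes (Zilber / Kirby). -/

open FirstOrder FirstOrder.Language Cardinal Set

universe u

namespace QMEC

variable (L : FirstOrder.Language.{u, u})

/-- An `L`-structure equipped with a closure operator (intended to be a pregeometry). -/
structure QMModel : Type (u + 1) where
  carrier : Type u
  [str : L.Structure carrier]
  cl : Set carrier → Set carrier

attribute [instance] QMModel.str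

/-- `cl` is a pregeometry on `α`. -/
structure IsPregeom {α : Type u} (cl : Set α → Set α) : Prop where
  subset_cl : ∀ X : Set α, X ⊆ cl X
  mono : ∀ ⦃X Y : Set α⦄, X ⊆ Y → cl X ⊆ cl Y
  idem : ∀ X : Set α, cl (cl X) = cl X
  finChar : ∀ (X : Set α) (y : α), y ∈ cl X → ∃ X₀ : Finset α, ↑X₀ ⊆ X ∧ y ∈ cl ↑X₀
  exchange : ∀ (X : Set α) (y z : α), y ∈ cl (X ∪ {z}) → y ∉ cl X → z ∈ cl (X ∪ {y})

/-- `B` is independent over `G`. -/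
def IndepOver {α : Type u} (cl : Set α → Set α) (G B : Set α) : Prop :=
  ∀ b ∈ B, b ∉ cl (G ∪ (B \ {b}))

/-- `B` is an independent set. -/
def Indep {α : Type u} (cl : Set α → Set α) (B : Set α) : Prop :=
  ∀ b ∈ B, b ∉ cl (B \ {b})

/-- `B` is a basis of `α` over `G`. -/
def IsBasisOver {α : Type u} (cl : Set α → Set α) (G B : Set α) : Prop :=
  IndepOver cl G B ∧ cl (G ∪ B) = Set.univ

/-- `H` has dimension `κ`: it has a basis of cardinality `κ`. -/
def HasDim (H : QMModel L) (κ : Cardinal.{u}) : Prop :=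
  ∃ B : Set H.carrier, IsBasisOver H.cl ∅ B ∧ #B = κ

variable {L}

/-- A partial embedding with domain `D`: injective on `D` and preserving (in both
directions) all quantifier-free formulas at tuples from `D`. -/
def IsPartialEmb (H H' : QMModel L) (D : Set H.carrier) (f : H.carrier → H'.carrier) : Prop :=
  Set.InjOn f D ∧
    ∀ (n : ℕ) (φ : L.Formula (Fin n)), φ.IsQF →
      ∀ a : Fin n → H.carrier, (∀ i, a i ∈ D) →
        (φ.Realize a ↔ φ.Realize (f ∘ a))

/-- A closed partial embedding: the image of every closed subset of the domain is closed. -/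
def IsClosedPartialEmb (H H' : QMModel L) (D : Set H.carrier)
    (f : H.carrier → H'.carrier) : Prop :=
  IsPartialEmb H H' D f ∧
    ∀ X ⊆ D, H.cl X = X → H'.cl (f '' X) = f '' X

/-- A crown: a finite union of closures of subsets of an independent set. -/
def IsCrown (H : QMModel L) (C : Set H.carrier) : Prop :=
  ∃ (B : Set H.carrier) (n : ℕ) (Bs : Fin n → Set H.carrier),
    Indep H.cl B ∧ (∀ i, Bs i ⊆ B) ∧ C = ⋃ i, H.cl (Bs i)

/-- Combination `f ∪ g` of two partial maps: use `f` on `D`, `g` elsewhere. -/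
noncomputable def combine {α β : Type*} (D : Set α) (f g : α → β) : α → β :=
  fun x => @ite _ (x ∈ D) (Classical.propDecidable _) (f x) (g x)

/-- Extension of a partial map by one pair `(y, y')`. -/
noncomputable def extend1 {α β : Type*} (f : α → β) (y : α) (y' : β) : α → β :=
  fun x => @ite _ (x = y) (Classical.propDecidable _) y' (f x)

/-- The submodel of `H` on a substructure `S`, with prescribed closure operator. -/
def QMModel.substruct (H : QMModel L) (S : L.Substructure H.carrier)
    (cls : Set ↥S → Set ↥S) : QMModel L :=
  { carrier := ↥S, cl := cls }

/-- The restriction of the closure operator of `H` to a subset (as a subtype). -/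
def QMModel.restrictCl (H : QMModel L) (S : L.Substructure H.carrier) :
    Set ↥S → Set ↥S :=
  fun Y => Subtype.val ⁻¹' H.cl (Subtype.val '' Y)

/-- `G` is the empty set or a countable closed subset of `H`. -/
def EmptyOrCtbleClosed (H : QMModel L) (G : Set H.carrier) : Prop :=
  G = ∅ ∨ (G.Countable ∧ H.cl G = G)

/-- Axiom I (pregeometry) for a class of models. -/
structure AxiomI (C : QMModel L → Prop) : Prop where
  pregeom : ∀ H, C H → IsPregeom H.cl
  ccp : ∀ H, C H → ∀ X : Set H.carrier, X.Finite → (H.cl X).Countable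
  closedSub : ∀ H, C H → ∀ X : Set H.carrier,
    ∃ S : L.Substructure H.carrier, (S : Set H.carrier) = H.cl X ∧
      C (H.substruct S (H.restrictCl S))
  clPreserved : ∀ H H' : QMModel L, C H → C H' →
    ∀ (D : Set H.carrier) (f : H.carrier → H'.carrier), IsPartialEmb H H' D f →
      ∀ X ⊆ D, ∀ y ∈ H.cl X, y ∈ D → f y ∈ H'.cl (f '' X)

/-- Axiom II (ℵ₀-homogeneity over countable closed submodels and over ∅). -/
structure AxiomII (C : QMModel L → Prop) : Prop where
  homog1 : ∀ H H' : QMModel L, C H → C H' →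
    ∀ (G : Set H.carrier) (G' : Set H'.carrier) (g : H.carrier → H'.carrier),
      EmptyOrCtbleClosed H G → EmptyOrCtbleClosed H' G' →
      IsPartialEmb H H' G g → g '' G = G' →
      ∀ x x', x ∉ H.cl G → x' ∉ H'.cl G' →
        IsPartialEmb H H' (G ∪ {x}) (extend1 g x x')
  homog2 : ∀ H H' : QMModel L, C H → C H' →
    ∀ (G : Set H.carrier) (G' : Set H'.carrier) (g : H.carrier → H'.carrier),
      EmptyOrCtbleClosed H G → EmptyOrCtbleClosed H' G' →
      IsPartialEmb H H' G g → g '' G = G' →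
      ∀ (X : Set H.carrier) (h : H.carrier → H'.carrier),
        X.Finite → (∀ z ∈ G, h z = g z) → IsPartialEmb H H' (G ∪ X) h →
        ∀ y ∈ H.cl (X ∪ G), ∃ y', IsPartialEmb H H' ((G ∪ X) ∪ {y}) (extend1 h y y')

/-- Axiom III (excellence): quantifier-free types over countable crowns are
determined over finite subsets. -/
structure AxiomIII (C : QMModel L → Prop) : Prop where
  excellence : ∀ H H' : QMModel L, C H → C H' →
    ∀ (Cr : Set H.carrier) (g : H.carrier → H'.carrier),
      IsCrown H Cr → Cr.Countable → IsClosedPartialEmb H H' Cr g →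
      ∀ X : Finset H.carrier, ↑X ⊆ H.cl Cr →
        ∃ C₀ : Finset H.carrier, ↑C₀ ⊆ Cr ∧
          ∀ f : H.carrier → H'.carrier,
            IsPartialEmb H H' (↑X ∪ ↑C₀) (combine ↑X f g) →
            IsPartialEmb H H' (↑X ∪ Cr) (combine ↑X f g)

/-- A quasiminimal excellent class: a class of `L`-structures-with-pregeometries
satisfying axioms I, II and III. -/
structure IsQEC (C : QMModel L → Prop) : Prop where
  axI : AxiomI C
  axII : AxiomII C
  axIII : AxiomIII C

/-- Axiom IV: unions of (ordinal-indexed, i.e. well-ordered) chains of closed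
embeddings, with the union pregeometry, stay in the class; and the class has an
infinite-dimensional model. -/
structure AxiomIV (C : QMModel L → Prop) : Prop where
  chains : ∀ (ι : Type u) [LinearOrder ι] [WellFoundedLT ι],
    ∀ (H : QMModel L) (S : ι → L.Substructure H.carrier)
      (cls : ∀ i, Set ↥(S i) → Set ↥(S i))
      (hmono : ∀ i j : ι, i ≤ j → (S i : Set H.carrier) ⊆ (S j : Set H.carrier)),
      (⋃ i, (S i : Set H.carrier)) = Set.univ →
      (∀ i, C (H.substruct (S i) (cls i))) →
      (∀ (i j : ι) (hij : i ≤ j) (X : Set ↥(S i)), cls i X = X →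
        cls j ((fun x : ↥(S i) => (⟨x.1, hmono i j hij x.2⟩ : ↥(S j))) '' X) =
          (fun x : ↥(S i) => (⟨x.1, hmono i j hij x.2⟩ : ↥(S j))) '' X) →
      (∀ X : Set H.carrier,
        H.cl X = ⋃ i, Subtype.val '' cls i (Subtype.val ⁻¹' X)) →
      C H
  infDim : ∃ H, C H ∧ ∃ B : Set H.carrier, IsBasisOver H.cl ∅ B ∧ B.Infinite

/-- `C` is uncountably categorical: exactly one model of each uncountable
cardinality, up to isomorphism. -/
def UncountablyCategorical (C : QMModel L → Prop) : Prop :=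
  ∀ κ : Cardinal.{u}, ℵ₀ < κ →
    (∃ H, C H ∧ #H.carrier = κ) ∧
    ∀ H H', C H → C H' → #H.carrier = κ → #H'.carrier = κ →
      Nonempty (H.carrier ≃[L] H'.carrier)

/-- Tuples `x`, `y` have the same quantifier-free type over `G`. -/
def SameQfTypeOver (H : QMModel L) (G : Set H.carrier) {n : ℕ}
    (x y : Fin n → H.carrier) : Prop :=
  ∀ (k : ℕ) (φ : L.Formula (Fin n ⊕ Fin k)), φ.IsQF →
    ∀ c : Fin k → H.carrier, (∀ i, c i ∈ G) →
      (φ.Realize (Sum.elim x c) ↔ φ.Realize (Sum.elim y c))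

/-- The reduct of a model along a language map, keeping the same pregeometry. -/
def QMModel.reduct {L0 : FirstOrder.Language.{u, u}} (φ : L0 →ᴸ L) (M : QMModel L) :
    QMModel L0 :=
  { carrier := M.carrier, str := φ.reduct M.carrier, cl := M.cl }


/-! ### Auxiliary lemmas for statement 5 -/

section Aux

variable {H H' : QMModel L} {K : QMModel L → Prop}

/-- Restriction of a partial embedding to a smaller domain. -/
theorem IsPartialEmb.mono {D D' : Set H.carrier} {f : H.carrier → H'.carrier}
    (hf : IsPartialEmb H H' D f) (hsub : D' ⊆ D) : IsPartialEmb H H' D' f :=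
  ⟨hf.1.mono hsub, fun n φ hφ a ha => hf.2 n φ hφ a (fun i => hsub (ha i))⟩

/-- A partial embedding only depends on the values on the domain. -/
theorem IsPartialEmb.congr {D : Set H.carrier} {f g : H.carrier → H'.carrier}
    (hf : IsPartialEmb H H' D f) (hfg : ∀ x ∈ D, g x = f x) : IsPartialEmb H H' D g := by
  constructor
  · intro x hx y hy hxy
    exact hf.1 hx hy (by rwa [hfg x hx, hfg y hy] at hxy)
  · intro n φ hφ a ha
    have : g ∘ a = f ∘ a := funext fun i => hfg (a i) (ha i)
    rw [this]
    exact hf.2 n φ hφ a ha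

/-- The inverse of a partial embedding is a partial embedding. -/
theorem IsPartialEmb.inv {D : Set H.carrier} {f : H.carrier → H'.carrier}
    (hf : IsPartialEmb H H' D f) (k : H'.carrier → H.carrier)
    (hk : ∀ x ∈ D, k (f x) = x) : IsPartialEmb H' H (f '' D) k := by
  constructor
  · rintro _ ⟨x, hx, rfl⟩ _ ⟨y, hy, rfl⟩ hxy
    rw [hk x hx, hk y hy] at hxy; rw [hxy]
  · intro n φ hφ a ha
    have hb : ∀ i, k (a i) ∈ D ∧ f (k (a i)) = a i := by
      intro i
      obtain ⟨x, hx, hxa⟩ := ha i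
      rw [← hxa, hk x hx]; exact ⟨hx, rfl⟩
    have h1 : f ∘ (k ∘ a) = a := funext fun i => (hb i).2
    have := hf.2 n φ hφ (k ∘ a) (fun i => (hb i).1)
    rw [h1] at this
    exact this.symm

/-- The closure of a countable set is countable. -/
theorem countable_cl (hK : IsQEC K) (hH : K H) {S : Set H.carrier} (hS : S.Countable) :
    (H.cl S).Countable := by
  have hpre := hK.axI.pregeom H hH
  have hsub : H.cl S ⊆ ⋃ t ∈ {t : Set H.carrier | t.Finite ∧ t ⊆ S}, H.cl t := by
    intro y hy
    obtain ⟨X₀, hX₀, hyX₀⟩ := hpre.finChar S y hy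
    exact Set.mem_biUnion ⟨X₀.finite_toSet, hX₀⟩ hyX₀
  exact Set.Countable.mono hsub <|
    (Set.countable_setOf_finite_subset hS).biUnion (fun t ht => hK.axI.ccp H hH t ht.1)

/-- Covering a countable set by a sequence. -/
theorem exists_seq_cover {α : Type u} [Nonempty α] {S : Set α} (hS : S.Countable) :
    ∃ u : ℕ → α, S ⊆ Set.range u := by
  obtain ⟨d⟩ := ‹Nonempty α›
  have h1 : (insert d S).Countable := hS.insert d
  obtain ⟨u, hu⟩ := h1.exists_eq_range ⟨d, Set.mem_insert d S⟩
  exact ⟨u, (Set.subset_insert d S).trans hu.subset⟩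

end Aux

section Step

variable {H H' : QMModel L} {K : QMModel L → Prop}

theorem extend1_self {α β : Type*} (h : α → β) (y : α) (y' : β) : extend1 h y y' y = y' := by
  simp [extend1]

theorem extend1_ne {α β : Type*} (h : α → β) (y : α) (y' : β) {x : α} (hx : x ≠ y) :
    extend1 h y y' x = h x := by
  simp [extend1, hx]

theorem combine_mem {α β : Type*} {D : Set α} (f g : α → β) {x : α} (hx : x ∈ D) :
    combine D f g x = f x := by
  simp [combine, hx]

theorem combine_not_mem {α β : Type*} {D : Set α} (f g : α → β) {x : α} (hx : x ∉ D) :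
    combine D f g x = g x := by
  simp [combine, hx]

/-- The forward extension step: a partial embedding on `Cr ∪ X` agreeing with the
closed partial embedding `f` on the crown `Cr` extends to any `y ∈ cl Cr`. -/
theorem step_lemma (hK : IsQEC K) (hH : K H) (hH' : K H')
    {Cr : Set H.carrier} (hCr : IsCrown H Cr) (hct : Cr.Countable)
    {f : H.carrier → H'.carrier} (hf : IsClosedPartialEmb H H' Cr f)
    {X : Set H.carrier} (hXfin : X.Finite) (hXsub : X ⊆ H.cl Cr)
    {h : H.carrier → H'.carrier} (hpe : IsPartialEmb H H' (Cr ∪ X) h)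
    (hagree : ∀ x ∈ Cr, h x = f x)
    {y : H.carrier} (hy : y ∈ H.cl Cr) :
    ∃ h', IsPartialEmb H H' ((Cr ∪ X) ∪ {y}) h' ∧ ∀ x ∈ Cr ∪ X, h' x = h x := by
  have hpre := hK.axI.pregeom H hH
  classical
  by_cases hyD : y ∈ Cr ∪ X
  · exact ⟨h, hpe.mono (Set.union_subset (Set.Subset.refl _)
      (Set.singleton_subset_iff.2 hyD)), fun x _ => rfl⟩
  · obtain ⟨Cr₁, hCr₁sub, hyCr₁⟩ := hpre.finChar Cr y hy
    set Xf : Finset H.carrier := insert y hXfin.toFinset with hXf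
    have hXfcoe : (↑Xf : Set H.carrier) = insert y X := by
      simp [hXf, Set.Finite.coe_toFinset]
    have hXfsub : (↑Xf : Set H.carrier) ⊆ H.cl Cr := by
      rw [hXfcoe]
      exact Set.insert_subset hy hXsub
    obtain ⟨C₀, hC₀sub, himp⟩ :=
      hK.axIII.excellence H H' hH hH' Cr f hCr hct hf Xf hXfsub
    -- homogeneity over ∅
    set X₂ : Set H.carrier := X ∪ ↑C₀ ∪ ↑Cr₁ with hX₂
    have hX₂fin : X₂.Finite := (hXfin.union (C₀.finite_toSet)).union (Cr₁.finite_toSet)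
    have hX₂sub : X₂ ⊆ Cr ∪ X := by
      rw [hX₂]
      refine Set.union_subset (Set.union_subset (Set.subset_union_right) ?_) ?_
      · exact fun x hx => Or.inl (hC₀sub hx)
      · exact fun x hx => Or.inl (hCr₁sub hx)
    have hpe₂ : IsPartialEmb H H' (∅ ∪ X₂) h := by
      rw [Set.empty_union]; exact hpe.mono hX₂sub
    have hy₂ : y ∈ H.cl (X₂ ∪ ∅) := by
      rw [Set.union_empty]
      exact hpre.mono (fun x hx => Or.inr hx) hyCr₁
    obtain ⟨y', hey⟩ := hK.axII.homog2 H H' hH hH' ∅ ∅ f (Or.inl rfl) (Or.inl rfl)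
      (hf.1.mono (Set.empty_subset _)) (by simp) X₂ h hX₂fin (fun z hz => absurd hz (by simp))
      hpe₂ y hy₂
    set e : H.carrier → H'.carrier := extend1 h y y' with he
    have hyCr : y ∉ Cr := fun hc => hyD (Or.inl hc)
    -- values of e on Cr ∪ X
    have heCrX : ∀ x ∈ Cr ∪ X, e x = h x := fun x hx =>
      extend1_ne h y y' (fun hxy => hyD (hxy ▸ hx))
    -- the combine map is a partial embedding on Xf ∪ C₀
    have hcombval : ∀ x ∈ (↑Xf : Set H.carrier) ∪ ↑C₀, combine (↑Xf) e f x = e x := by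
      intro x hx
      by_cases hxXf : x ∈ (↑Xf : Set H.carrier)
      · exact combine_mem e f hxXf
      · have hxC₀ : x ∈ (↑C₀ : Set H.carrier) := hx.resolve_left hxXf
        have hxCr : x ∈ Cr := hC₀sub hxC₀
        rw [combine_not_mem e f hxXf, heCrX x (Or.inl hxCr), hagree x hxCr]
    have hsub1 : (↑Xf : Set H.carrier) ∪ ↑C₀ ⊆ (∅ ∪ X₂) ∪ {y} := by
      rw [Set.empty_union, hXfcoe, hX₂]
      rintro x (hx | hx)
      · rcases hx with hx | hx
        · exact Or.inr hx
        · exact Or.inl (Or.inl (Or.inl hx))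
      · exact Or.inl (Or.inl (Or.inr hx))
    have hcomb : IsPartialEmb H H' (↑Xf ∪ ↑C₀) (combine (↑Xf) e f) :=
      (hey.mono hsub1).congr hcombval
    have hbig : IsPartialEmb H H' (↑Xf ∪ Cr) (combine (↑Xf) e f) := himp e hcomb
    refine ⟨combine (↑Xf) e f, hbig.mono ?_, ?_⟩
    · rw [hXfcoe]
      rintro x ((hx | hx) | hx)
      · exact Or.inr hx
      · exact Or.inl (Or.inr hx)
      · exact Or.inl (Or.inl (Set.mem_singleton_iff.1 hx))
    · intro x hx
      by_cases hxXf : x ∈ (↑Xf : Set H.carrier)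
      · rw [combine_mem e f hxXf]; exact heCrX x hx
      · rw [combine_not_mem e f hxXf]
        have hxCr : x ∈ Cr := by
          rcases hx with hx | hx
          · exact hx
          · exact absurd (by rw [hXfcoe]; exact Or.inr hx) hxXf
        exact (hagree x hxCr).symm

end Step

section Swap

variable {H H' : QMModel L} {K : QMModel L → Prop}

theorem swap_lemma (hK : IsQEC K) (hH : K H) (hH' : K H')
    {Cr : Set H.carrier} (hCr : IsCrown H Cr) (hct : Cr.Countable)
    {f : H.carrier → H'.carrier} (hf : IsClosedPartialEmb H H' Cr f)
    (finv : H'.carrier → H.carrier) (hfinv : ∀ x ∈ Cr, finv (f x) = x) :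
    IsCrown H' (f '' Cr) ∧ IsClosedPartialEmb H' H (f '' Cr) finv := by
  have hpre := hK.axI.pregeom H hH
  have hpre' := hK.axI.pregeom H' hH'
  have hpe' : IsPartialEmb H' H (f '' Cr) finv := hf.1.inv finv hfinv
  have himgS : ∀ S ⊆ Cr, finv '' (f '' S) = S := by
    intro S hS
    apply Set.Subset.antisymm
    · rintro _ ⟨_, ⟨x, hx, rfl⟩, rfl⟩
      rw [hfinv x (hS hx)]; exact hx
    · intro x hx
      exact ⟨f x, ⟨x, hx, rfl⟩, hfinv x (hS hx)⟩
  constructor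
  · -- crown
    obtain ⟨B, n, Bs, hB, hBsub, hCrEq⟩ := hCr
    set Bu : Set H.carrier := ⋃ i, Bs i with hBu
    have hBuB : Bu ⊆ B := Set.iUnion_subset hBsub
    have hBsCr : ∀ i, Bs i ⊆ Cr := by
      intro i x hx
      rw [hCrEq]
      exact Set.mem_iUnion.2 ⟨i, hpre.subset_cl _ hx⟩
    have hBuCr : Bu ⊆ Cr := Set.iUnion_subset hBsCr
    have hclBsCr : ∀ i, H.cl (Bs i) ⊆ Cr := by
      intro i x hx
      rw [hCrEq]; exact Set.mem_iUnion.2 ⟨i, hx⟩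
    have hcomp : ∀ i, f '' (H.cl (Bs i)) = H'.cl (f '' (Bs i)) := by
      intro i
      apply Set.Subset.antisymm
      · rintro _ ⟨x, hx, rfl⟩
        exact hK.axI.clPreserved H H' hH hH' Cr f hf.1 (Bs i) (hBsCr i) x hx (hclBsCr i hx)
      · have hclosed : H'.cl (f '' (H.cl (Bs i))) = f '' (H.cl (Bs i)) :=
          hf.2 (H.cl (Bs i)) (hclBsCr i) (hpre.idem _)
        calc H'.cl (f '' (Bs i)) ⊆ H'.cl (f '' (H.cl (Bs i))) :=
              hpre'.mono (Set.image_mono (f := f) (hpre.subset_cl _))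
          _ = f '' (H.cl (Bs i)) := hclosed
    refine ⟨f '' Bu, n, fun i => f '' (Bs i), ?_,
      fun i => Set.image_mono (f := f) (Set.subset_iUnion Bs i), ?_⟩
    · -- independence
      rintro _ ⟨b, hb, rfl⟩ hmem
      have hsub2 : f '' Bu \ {f b} ⊆ f '' (Bu \ {b}) := by
        rintro _ ⟨⟨c, hc, rfl⟩, hne⟩
        exact ⟨c, ⟨hc, fun hcb => hne (by rw [Set.mem_singleton_iff] at hcb ⊢; rw [hcb])⟩, rfl⟩
      have hmem' : f b ∈ H'.cl (f '' (Bu \ {b})) := hpre'.mono hsub2 hmem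
      have hstep := hK.axI.clPreserved H' H hH' hH (f '' Cr) finv hpe'
        (f '' (Bu \ {b})) (Set.image_mono (f := f) ((Set.diff_subset).trans hBuCr))
        (f b) hmem' ⟨b, hBuCr hb, rfl⟩
      rw [himgS _ ((Set.diff_subset).trans hBuCr), hfinv b (hBuCr hb)] at hstep
      -- b ∈ cl (Bu \ {b}) contradicts independence of B
      exact hB b (hBuB hb) (hpre.mono (Set.diff_subset_diff_left hBuB) hstep)
    · rw [hCrEq, Set.image_iUnion]
      exact Set.iUnion_congr hcomp
  · -- closed partial embedding
    refine ⟨hpe', ?_⟩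
    intro X' hX'sub hX'closed
    set X : Set H.carrier := finv '' X' with hXdef
    have hXsub : X ⊆ Cr := by
      rintro _ ⟨y', hy', rfl⟩
      obtain ⟨x, hx, rfl⟩ := hX'sub hy'
      rw [hfinv x hx]; exact hx
    have hfX : f '' X = X' := by
      rw [hXdef]
      apply Set.Subset.antisymm
      · rintro _ ⟨_, ⟨y', hy', rfl⟩, rfl⟩
        obtain ⟨x, hx, rfl⟩ := hX'sub hy'
        rwa [hfinv x hx]
      · intro y' hy'
        obtain ⟨x, hx, rfl⟩ := hX'sub hy'
        exact ⟨finv (f x), ⟨f x, hy', rfl⟩, by rw [hfinv x hx]⟩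
    apply Set.Subset.antisymm _ (hpre.subset_cl X)
    intro z hz
    have hzCr : z ∈ H.cl Cr := hpre.mono hXsub hz
    have hpe0 : IsPartialEmb H H' (Cr ∪ (∅ : Set H.carrier)) f :=
      hf.1.mono (by rw [Set.union_empty])
    obtain ⟨h', h'pe, h'agree⟩ := step_lemma hK hH hH' hCr hct hf Set.finite_empty
      (Set.empty_subset _) hpe0 (fun x _ => rfl) hzCr
    have hXdom : X ⊆ (Cr ∪ (∅ : Set H.carrier)) ∪ {z} := fun x hx => Or.inl (Or.inl (hXsub hx))
    have hzdom : z ∈ (Cr ∪ (∅ : Set H.carrier)) ∪ {z} := Or.inr rfl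
    have h1 : h' z ∈ H'.cl (h' '' X) :=
      hK.axI.clPreserved H H' hH hH' _ h' h'pe X hXdom z hz hzdom
    have h2 : h' '' X = X' := by
      rw [Set.image_congr (fun a ha => h'agree a (Or.inl (hXsub ha)))]
      exact hfX
    rw [h2, hX'closed] at h1
    -- h' z ∈ X' = f '' X
    rw [← hfX] at h1
    obtain ⟨w, hw, hwz⟩ := h1
    have hweq : h' w = h' z := by
      rw [h'agree w (Or.inl (hXsub hw))]; exact hwz
    have : w = z := h'pe.1 (Or.inl (Or.inl (hXsub hw))) hzdom hweq
    rwa [← this]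

end Swap

section Back

variable {H H' : QMModel L} {K : QMModel L → Prop}

theorem back_lemma (hK : IsQEC K) (hH : K H) (hH' : K H')
    (hne : Nonempty H.carrier)
    {Cr : Set H.carrier} (hCr : IsCrown H Cr) (hct : Cr.Countable)
    {f : H.carrier → H'.carrier} (hf : IsClosedPartialEmb H H' Cr f)
    {finv : H'.carrier → H.carrier} (hfinv : ∀ x ∈ Cr, finv (f x) = x)
    (hcrown' : IsCrown H' (f '' Cr)) (hclosed' : IsClosedPartialEmb H' H (f '' Cr) finv)
    {X : Set H.carrier} (hXfin : X.Finite) (hXsub : X ⊆ H.cl Cr)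
    {h : H.carrier → H'.carrier} (hpe : IsPartialEmb H H' (Cr ∪ X) h)
    (hagree : ∀ x ∈ Cr, h x = f x)
    {y' : H'.carrier} (hy' : y' ∈ H'.cl (f '' Cr)) :
    ∃ z h', z ∈ H.cl Cr ∧ IsPartialEmb H H' ((Cr ∪ X) ∪ {z}) h' ∧
      (∀ x ∈ Cr ∪ X, h' x = h x) ∧ h' z = y' := by
  classical
  have hpre := hK.axI.pregeom H hH
  have hpre' := hK.axI.pregeom H' hH'
  have := hne
  set hinv : H'.carrier → H.carrier :=
    fun w => if hw : ∃ x, x ∈ Cr ∪ X ∧ h x = w then hw.choose else Classical.arbitrary _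
    with hinvdef
  have hinvspec : ∀ w, (∃ x, x ∈ Cr ∪ X ∧ h x = w) → hinv w ∈ Cr ∪ X ∧ h (hinv w) = w := by
    intro w hw
    rw [hinvdef]
    simp only [dif_pos hw]
    exact hw.choose_spec
  have hinv1 : ∀ x ∈ Cr ∪ X, hinv (h x) = x := by
    intro x hx
    obtain ⟨hmem, heq⟩ := hinvspec (h x) ⟨x, hx, rfl⟩
    exact hpe.1 hmem hx heq
  have hinvagree : ∀ w ∈ f '' Cr, hinv w = finv w := by
    rintro _ ⟨c, hc, rfl⟩
    rw [← hagree c hc, hinv1 c (Or.inl hc), hagree c hc, hfinv c hc]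
  have hCrimg : h '' Cr = f '' Cr := Set.image_congr hagree
  have hinvpe : IsPartialEmb H' H (f '' Cr ∪ h '' X) hinv := by
    have := hpe.inv hinv hinv1
    rwa [Set.image_union, hCrimg] at this
  have hXimg : h '' X ⊆ H'.cl (f '' Cr) := by
    rintro _ ⟨x, hx, rfl⟩
    have := hK.axI.clPreserved H H' hH hH' (Cr ∪ X) h hpe Cr Set.subset_union_left
      x (hXsub hx) (Or.inr hx)
    rwa [hCrimg] at this
  obtain ⟨k, kpe, kagree⟩ := step_lemma hK hH' hH hcrown' (hct.image f) hclosed'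
    (hXfin.image h) hXimg hinvpe hinvagree hy'
  set z : H.carrier := k y' with hzdef
  have hzcl : z ∈ H.cl Cr := by
    have h1 := hK.axI.clPreserved H' H hH' hH _ k kpe (f '' Cr)
      (fun w hw => Or.inl (Or.inl hw)) y' hy' (Or.inr rfl)
    have h2 : k '' (f '' Cr) = Cr := by
      rw [Set.image_congr (fun w hw => kagree w (Or.inl hw))]
      rw [Set.image_congr hinvagree]
      apply Set.Subset.antisymm
      · rintro _ ⟨_, ⟨x, hx, rfl⟩, rfl⟩
        rw [hfinv x hx]; exact hx
      · intro x hx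
        exact ⟨f x, ⟨x, hx, rfl⟩, hfinv x hx⟩
    rwa [h2] at h1
  by_cases hzD : z ∈ Cr ∪ X
  · -- then y' is already in the image of h
    have h3 : h z ∈ f '' Cr ∪ h '' X := by
      rcases hzD with hz | hz
      · exact Or.inl ⟨z, hz, (hagree z hz).symm⟩
      · exact Or.inr ⟨z, hz, rfl⟩
    have h4 : k (h z) = z := by
      rw [kagree (h z) h3]
      exact hinv1 z hzD
    have h5 : h z = y' := kpe.1 (Or.inl h3) (Or.inr rfl) (by rw [h4])
    refine ⟨z, h, hzcl, hpe.mono (Set.union_subset (Set.Subset.refl _)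
      (Set.singleton_subset_iff.2 hzD)), fun x _ => rfl, h5⟩
  · set h' : H.carrier → H'.carrier := extend1 h z y' with h'def
    have hmap : ∀ x ∈ (Cr ∪ X) ∪ {z},
        h' x ∈ (f '' Cr ∪ h '' X) ∪ {y'} ∧ k (h' x) = x := by
      rintro x (hx | hx)
      · have hxz : x ≠ z := fun hc => hzD (hc ▸ hx)
        have hval : h' x = h x := extend1_ne h z y' hxz
        have h3 : h x ∈ f '' Cr ∪ h '' X := by
          rcases hx with hx1 | hx1
          · exact Or.inl ⟨x, hx1, (hagree x hx1).symm⟩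
          · exact Or.inr ⟨x, hx1, rfl⟩
        refine ⟨by rw [hval]; exact Or.inl h3, ?_⟩
        rw [hval, kagree (h x) h3, hinv1 x hx]
      · rw [Set.mem_singleton_iff] at hx
        subst hx
        rw [h'def]
        refine ⟨by rw [extend1_self]; exact Or.inr rfl, ?_⟩
        rw [extend1_self]
    refine ⟨z, h', hzcl, ⟨?_, ?_⟩, ?_, by rw [h'def, extend1_self]⟩
    · intro x hx y hy hxy
      have := congrArg k hxy
      rw [(hmap x hx).2, (hmap y hy).2] at this
      exact this
    · intro n φ hφ a ha
      have h6 := kpe.2 n φ hφ (h' ∘ a) (fun i => (hmap (a i) (ha i)).1)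
      have h7 : k ∘ (h' ∘ a) = a := funext fun i => (hmap (a i) (ha i)).2
      rw [h7] at h6
      exact h6.symm
    · intro x hx
      exact extend1_ne h z y' (fun hc => hzD (hc ▸ hx))

end Back

/-- excellence, Shelah style: every closed partial embedding
with domain a countable crown `Cr` extends to a closed embedding defined on
`cl_H(Cr)`. -/
theorem statement_5 (L : FirstOrder.Language.{u, u}) (C : QMModel L → Prop)
    (hC : IsQEC C) (H H' : QMModel L) (hH : C H) (hH' : C H')
    (Cr : Set H.carrier) (hCr : IsCrown H Cr) (hctble : Cr.Countable)
    (f : H.carrier → H'.carrier) (hf : IsClosedPartialEmb H H' Cr f) :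
    ∃ g : H.carrier → H'.carrier, (∀ x ∈ Cr, g x = f x) ∧
      IsClosedPartialEmb H H' (H.cl Cr) g := by
  classical
  rcases isEmpty_or_nonempty H.carrier with hemp | hne
  · refine ⟨f, fun x _ => rfl, hf.1.mono (fun x _ => (IsEmpty.false x).elim), ?_⟩
    intro X _ _
    have hX : X = ∅ := Set.eq_empty_of_isEmpty X
    subst hX
    exact hf.2 ∅ (Set.empty_subset _) (Set.eq_empty_of_isEmpty _)
  · have hne' : Nonempty H'.carrier := ⟨f (Classical.arbitrary _)⟩
    have hpre := hC.axI.pregeom H hH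
    have hpre' := hC.axI.pregeom H' hH'
    -- an inverse for f on Cr
    set finv : H'.carrier → H.carrier :=
      fun w => if hw : ∃ x, x ∈ Cr ∧ f x = w then hw.choose else Classical.arbitrary _
      with hfinvdef
    have hfinv : ∀ x ∈ Cr, finv (f x) = x := by
      intro x hx
      have hw : ∃ c, c ∈ Cr ∧ f c = f x := ⟨x, hx, rfl⟩
      rw [hfinvdef]; simp only [dif_pos hw]
      exact hf.1.1 hw.choose_spec.1 hx hw.choose_spec.2
    obtain ⟨hcrown', hclosed'⟩ := swap_lemma hC hH hH' hCr hctble hf finv hfinv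
    -- countable enumerations
    obtain ⟨u, hu⟩ := exists_seq_cover (countable_cl hC hH hctble)
    obtain ⟨u', hu'⟩ := exists_seq_cover (countable_cl hC hH' (hctble.image f))
    -- the invariant
    set Good : Set H.carrier → (H.carrier → H'.carrier) → Prop := fun X h =>
      X.Finite ∧ X ⊆ H.cl Cr ∧ IsPartialEmb H H' (Cr ∪ X) h ∧ ∀ x ∈ Cr, h x = f x
      with hGooddef
    have good0 : Good ∅ f :=
      ⟨Set.finite_empty, Set.empty_subset _, hf.1.mono (by rw [Set.union_empty]),
        fun x _ => rfl⟩
    -- one extension step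
    have hstep : ∀ (n : ℕ) (X : Set H.carrier) (h : H.carrier → H'.carrier), Good X h →
        ∃ X₂ h₂, Good X₂ h₂ ∧ X ⊆ X₂ ∧ (∀ x ∈ Cr ∪ X, h₂ x = h x) ∧
          (n % 2 = 0 → u (n / 2) ∈ H.cl Cr → u (n / 2) ∈ Cr ∪ X₂) ∧
          (n % 2 = 1 → u' (n / 2) ∈ H'.cl (f '' Cr) →
            u' (n / 2) ∈ h₂ '' (Cr ∪ X₂)) := by
      intro n X h hGXh
      obtain ⟨hXfin, hXsub, hpe, hagree⟩ := hGXh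
      rcases Nat.mod_two_eq_zero_or_one n with hn | hn
      · by_cases hu0 : u (n / 2) ∈ H.cl Cr
        · obtain ⟨h', h'pe, h'ag⟩ := step_lemma hC hH hH' hCr hctble hf hXfin hXsub
            hpe hagree hu0
          refine ⟨X ∪ {u (n / 2)}, h', ⟨hXfin.union (Set.finite_singleton _),
            Set.union_subset hXsub (Set.singleton_subset_iff.2 hu0),
            by rw [← Set.union_assoc]; exact h'pe,
            fun x hx => by rw [h'ag x (Or.inl hx)]; exact hagree x hx⟩,
            Set.subset_union_left, h'ag, fun _ _ => Or.inr (Or.inr rfl),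
            fun hn1 _ => absurd (hn.symm.trans hn1) (by norm_num)⟩
        · exact ⟨X, h, ⟨hXfin, hXsub, hpe, hagree⟩, Set.Subset.refl _, fun x _ => rfl,
            fun _ habs => absurd habs hu0,
            fun hn1 _ => absurd (hn.symm.trans hn1) (by norm_num)⟩
      · by_cases hu1 : u' (n / 2) ∈ H'.cl (f '' Cr)
        · obtain ⟨z, h', hzcl, h'pe, h'ag, h'val⟩ := back_lemma hC hH hH' hne hCr hctble
            hf hfinv hcrown' hclosed' hXfin hXsub hpe hagree hu1
          refine ⟨X ∪ {z}, h', ⟨hXfin.union (Set.finite_singleton _),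
            Set.union_subset hXsub (Set.singleton_subset_iff.2 hzcl),
            by rw [← Set.union_assoc]; exact h'pe,
            fun x hx => by rw [h'ag x (Or.inl hx)]; exact hagree x hx⟩,
            Set.subset_union_left, h'ag,
            fun hn0 _ => absurd (hn.symm.trans hn0) (by norm_num),
            fun _ _ => ⟨z, Or.inr (Or.inr rfl), h'val⟩⟩
        · exact ⟨X, h, ⟨hXfin, hXsub, hpe, hagree⟩, Set.Subset.refl _, fun x _ => rfl,
            fun hn0 _ => absurd (hn.symm.trans hn0) (by norm_num),
            fun _ habs => absurd habs hu1⟩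
    choose X₂ h₂ hG2 hsub2 hag2 hev2 hod2 using hstep
    -- the recursive sequence
    set seq : ℕ → {p : Set H.carrier × (H.carrier → H'.carrier) // Good p.1 p.2} :=
      fun n => Nat.rec ⟨(∅, f), good0⟩
        (fun n p => ⟨(X₂ n p.1.1 p.1.2 p.2, h₂ n p.1.1 p.1.2 p.2),
          hG2 n p.1.1 p.1.2 p.2⟩) n
      with hseqdef
    set Xs : ℕ → Set H.carrier := fun n => (seq n).1.1 with hXsdef
    set hs : ℕ → H.carrier → H'.carrier := fun n => (seq n).1.2 with hhsdef
    have hGs : ∀ n, Good (Xs n) (hs n) := fun n => (seq n).2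
    have hXs0 : Xs 0 = ∅ := rfl
    have hhs0 : hs 0 = f := rfl
    have hXsS : ∀ n, Xs (n + 1) = X₂ n (Xs n) (hs n) (hGs n) := fun n => rfl
    have hhsS : ∀ n, hs (n + 1) = h₂ n (Xs n) (hs n) (hGs n) := fun n => rfl
    have hmono1 : ∀ n, Xs n ⊆ Xs (n + 1) := by
      intro n; rw [hXsS n]; exact hsub2 n _ _ _
    have hagstep : ∀ n, ∀ x ∈ Cr ∪ Xs n, hs (n + 1) x = hs n x := by
      intro n; rw [hhsS n]; exact hag2 n _ _ _
    have hmono : ∀ m n, m ≤ n → Xs m ⊆ Xs n := by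
      intro m n hmn
      induction n, hmn using Nat.le_induction with
      | base => exact Set.Subset.refl _
      | succ n hmn ih => exact ih.trans (hmono1 n)
    have hagall : ∀ m n, m ≤ n → ∀ x ∈ Cr ∪ Xs m, hs n x = hs m x := by
      intro m n hmn
      induction n, hmn using Nat.le_induction with
      | base => exact fun x _ => rfl
      | succ n hmn ih =>
        intro x hx
        have hx' : x ∈ Cr ∪ Xs n := by
          rcases hx with hx | hx
          · exact Or.inl hx
          · exact Or.inr (hmono m n hmn hx)
        rw [hagstep n x hx']
        exact ih x hx
    -- the limit map
    set g : H.carrier → H'.carrier :=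
      fun x => if hx : ∃ n, x ∈ Cr ∪ Xs n then hs hx.choose x else f x with hgdef
    have hgval : ∀ n, ∀ x ∈ Cr ∪ Xs n, g x = hs n x := by
      intro n x hx
      have hex : ∃ m, x ∈ Cr ∪ Xs m := ⟨n, hx⟩
      rw [hgdef]; simp only [dif_pos hex]
      have h1 := hagall hex.choose (max hex.choose n) (le_max_left _ _) x hex.choose_spec
      have h2 := hagall n (max hex.choose n) (le_max_right _ _) x hx
      rw [← h1, h2]
    have hgCr : ∀ x ∈ Cr, g x = f x := by
      intro x hx
      rw [hgval 0 x (Or.inl hx), hhs0]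
    -- coverage
    have hcov : ∀ a ∈ H.cl Cr, ∃ N, a ∈ Cr ∪ Xs N := by
      intro a ha
      obtain ⟨m, rfl⟩ := hu ha
      refine ⟨2 * m + 1, ?_⟩
      have hdiv : (2 * m) / 2 = m := by omega
      have := hev2 (2 * m) (Xs (2 * m)) (hs (2 * m)) (hGs (2 * m)) (by omega)
      rw [hdiv] at this
      rw [hXsS (2 * m)]
      exact this ha
    have hcov' : ∀ a' ∈ H'.cl (f '' Cr), ∃ N x, x ∈ Cr ∪ Xs N ∧ hs N x = a' := by
      intro a' ha'
      obtain ⟨m, rfl⟩ := hu' ha'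
      have hdiv : (2 * m + 1) / 2 = m := by omega
      have := hod2 (2 * m + 1) (Xs (2 * m + 1)) (hs (2 * m + 1)) (hGs (2 * m + 1)) (by omega)
      rw [hdiv] at this
      obtain ⟨x, hx, hval⟩ := this ha'
      refine ⟨2 * m + 2, x, ?_, ?_⟩
      · rw [show (2 * m + 2) = (2 * m + 1) + 1 from rfl, hXsS (2 * m + 1)]
        exact hx
      · rw [show (2 * m + 2) = (2 * m + 1) + 1 from rfl, hhsS (2 * m + 1)]
        exact hval
    have hdomsub : ∀ N, Cr ∪ Xs N ⊆ H.cl Cr := fun N =>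
      Set.union_subset (hpre.subset_cl Cr) (hGs N).2.1
    -- g is a partial embedding on cl Cr
    have hgpe : IsPartialEmb H H' (H.cl Cr) g := by
      constructor
      · intro x hx y hy hxy
        obtain ⟨N₁, hx1⟩ := hcov x hx
        obtain ⟨N₂, hy2⟩ := hcov y hy
        have hx' : x ∈ Cr ∪ Xs (max N₁ N₂) :=
          Set.union_subset_union_right Cr (hmono N₁ _ (le_max_left _ _)) hx1
        have hy' : y ∈ Cr ∪ Xs (max N₁ N₂) :=
          Set.union_subset_union_right Cr (hmono N₂ _ (le_max_right _ _)) hy2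
        rw [hgval _ x hx', hgval _ y hy'] at hxy
        exact (hGs (max N₁ N₂)).2.2.1.1 hx' hy' hxy
      · intro n φ hφ a ha
        have hNs : ∀ i, ∃ N, a i ∈ Cr ∪ Xs N := fun i => hcov (a i) (ha i)
        choose Ns hNs using hNs
        set N : ℕ := (Finset.univ : Finset (Fin n)).sup Ns with hN
        have ha' : ∀ i, a i ∈ Cr ∪ Xs N := fun i =>
          Set.union_subset_union_right Cr
            (hmono (Ns i) N (Finset.le_sup (Finset.mem_univ i))) (hNs i)
        have hcomp : g ∘ a = hs N ∘ a := funext fun i => hgval N (a i) (ha' i)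
        rw [hcomp]
        exact (hGs N).2.2.1.2 n φ hφ a ha'
    -- the image of g is cl' (f '' Cr)
    have himgall : g '' (H.cl Cr) = H'.cl (f '' Cr) := by
      apply Set.Subset.antisymm
      · rintro _ ⟨x, hx, rfl⟩
        obtain ⟨N, hxN⟩ := hcov x hx
        rw [hgval N x hxN]
        have h1 := hC.axI.clPreserved H H' hH hH' (Cr ∪ Xs N) (hs N) (hGs N).2.2.1
          Cr Set.subset_union_left x hx hxN
        rwa [Set.image_congr (fun c hc => (hGs N).2.2.2 c hc)] at h1
      · intro a' ha'
        obtain ⟨N, x, hx, hval⟩ := hcov' a' ha'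
        exact ⟨x, hdomsub N hx, by rw [hgval N x hx]; exact hval⟩
    -- closedness
    refine ⟨g, hgCr, hgpe, ?_⟩
    intro X hXsub hXcl
    apply Set.Subset.antisymm _ (hpre'.subset_cl _)
    intro y' hy'
    have hy'big : y' ∈ H'.cl (f '' Cr) := by
      have h1 : H'.cl (g '' X) ⊆ H'.cl (g '' (H.cl Cr)) :=
        hpre'.mono (Set.image_mono (f := g) hXsub)
      rw [himgall, hpre'.idem] at h1
      exact h1 hy'
    rw [← himgall] at hy'big
    obtain ⟨z, hzcl, rfl⟩ := hy'big
    -- inverse of g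
    set ginv : H'.carrier → H.carrier :=
      fun w => if hw : ∃ x, x ∈ H.cl Cr ∧ g x = w then hw.choose else Classical.arbitrary _
      with hginvdef
    have hginv : ∀ x ∈ H.cl Cr, ginv (g x) = x := by
      intro x hx
      have hw : ∃ c, c ∈ H.cl Cr ∧ g c = g x := ⟨x, hx, rfl⟩
      rw [hginvdef]; simp only [dif_pos hw]
      exact hgpe.1 hw.choose_spec.1 hx hw.choose_spec.2
    have hginvpe : IsPartialEmb H' H (g '' (H.cl Cr)) ginv := hgpe.inv ginv hginv
    have h2 := hC.axI.clPreserved H' H hH' hH (g '' (H.cl Cr)) ginv hginvpe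
      (g '' X) (Set.image_mono (f := g) hXsub) (g z) hy' ⟨z, hzcl, rfl⟩
    have h3 : ginv '' (g '' X) = X := by
      apply Set.Subset.antisymm
      · rintro _ ⟨_, ⟨x, hx, rfl⟩, rfl⟩
        rw [hginv x (hXsub hx)]; exact hx
      · intro x hx
        exact ⟨g x, ⟨x, hx, rfl⟩, hginv x (hXsub hx)⟩
    rw [h3, hginv z hzcl, hXcl] at h2
    exact ⟨z, h2, rfl⟩

end QMEC
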